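/- Let κ be an uncountable regular cardinal with κ^{<κ}=κ and let K be 2 or κ. Every small set in K^κ is nowhere dense, but there exists a nowhere dense subset of K^κ that is not κ-strongly null (hence not small). -/

import Mathlib

noncomputable section

open Cardinal Set

namespace GenSp

/-- The index set: a canonical type of order type `κ.ord`. -/
abbrev I (κ : Cardinal.{0}) : Type := κ.ord.ToType

variable (κ : Cardinal.{0}) (A : Type)

/-- The generalized space `A^κ`. -/
abbrev Sp : Type := I κ → A

/-- The basic clopen set `[x ↾ ξ]`: all functions agreeing with `x` below `ξ`. -/
def cyl (x : Sp κ A) (ξ : I κ) : Set (Sp κ A) := {y | ∀ β < ξ, y β = x β}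

/-- The bounded topology on `A^κ`, generated by the basic clopen sets. -/
def bt : TopologicalSpace (Sp κ A) :=
  .generateFrom {S | ∃ x ξ, S = cyl κ A x ξ}

/-- Open in the bounded topology. -/
def OpenK (s : Set (Sp κ A)) : Prop := @IsOpen _ (bt κ A) s

/-- Closed in the bounded topology. -/
def ClosedK (s : Set (Sp κ A)) : Prop := @IsClosed _ (bt κ A) s

/-- Nowhere dense in the bounded topology. -/
def NwdK (s : Set (Sp κ A)) : Prop := @IsNowhereDense _ (bt κ A) s

/-- κ-meagre: a union of (at most) κ nowhere dense sets. -/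
def MeagreK (s : Set (Sp κ A)) : Prop :=
  ∃ f : I κ → Set (Sp κ A), (∀ i, NwdK κ A (f i)) ∧ s = ⋃ i, f i

/-- κ-strongly null set. -/
def SNullK (S : Set (Sp κ A)) : Prop :=
  ∀ ξ : I κ → I κ, ∃ a : I κ → Sp κ A, S ⊆ ⋃ α, cyl κ A (a α) (ξ α)

/-- Coordinatewise addition over `ℤ₂` (translation by `x`). -/
def xadd (x y : Sp κ Bool) : Sp κ Bool := fun i => xor (x i) (y i)

/-- The covering number of the κ-meagre ideal. -/
def covM : Cardinal :=
  sInf {c | ∃ 𝒜 : Set (Set (Sp κ A)), #𝒜 = c ∧ (∀ s ∈ 𝒜, MeagreK κ A s) ∧ ⋃₀ 𝒜 = Set.univ}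

/-- The cofinality of the κ-meagre ideal. -/
def cofM : Cardinal :=
  sInf {c | ∃ 𝒜 : Set (Set (Sp κ A)), #𝒜 = c ∧ (∀ s ∈ 𝒜, MeagreK κ A s) ∧
    ∀ t, MeagreK κ A t → ∃ s ∈ 𝒜, t ⊆ s}

/-- κ is weakly compact: uncountable and with the partition property κ → (κ)²₂. -/
def IsWeaklyCompact (κ : Cardinal.{0}) : Prop :=
  ℵ₀ < κ ∧ ∀ c : I κ → I κ → Bool, ∃ H : Set (I κ), #H = κ ∧
    ∃ b : Bool, ∀ i ∈ H, ∀ j ∈ H, i < j → c i j = b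

/-- `S` is κ-meagre relative to `P` (in the subspace topology). -/
def MeagreInK (P S : Set (Sp κ A)) : Prop :=
  ∃ f : I κ → Set P,
    (∀ i, @IsNowhereDense _ (TopologicalSpace.induced Subtype.val (bt κ A)) (f i)) ∧
    {x : P | (x : Sp κ A) ∈ S} = ⋃ i, f i

/-- Perfect set in the bounded topology. -/
def PerfK (P : Set (Sp κ A)) : Prop := @Perfect _ (bt κ A) P

/-- Perfectly κ-meagre set. -/
def PMeagreK (S : Set (Sp κ A)) : Prop := ∀ P, PerfK κ A P → MeagreInK κ A P S

/-- κ-λ-set. -/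
def KLambdaSet (S : Set (Sp κ A)) : Prop :=
  ∀ B ⊆ S, #B ≤ κ → ∃ G : I κ → Set (Sp κ A),
    (∀ i, OpenK κ A (G i)) ∧ (⋂ i, G i) ∩ S = B

/-- κ-σ-set. -/
def KSigmaSet (S : Set (Sp κ A)) : Prop :=
  ∀ F : I κ → Set (Sp κ A), (∀ i, ClosedK κ A (F i)) →
    ∃ G : I κ → Set (Sp κ A), (∀ i, OpenK κ A (G i)) ∧
      S ∩ (⋃ i, F i) = S ∩ (⋂ i, G i)

/-- κ-γ-set: every open (proper) κ-cover contains a κ-γ-subcover of size κ. -/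
def KGammaSet (X : Set (Sp κ A)) : Prop :=
  ∀ 𝒰 : Set (Set (Sp κ A)), (∀ U ∈ 𝒰, OpenK κ A U) → X ∉ 𝒰 →
    (∀ C ⊆ X, #C < κ → ∃ U ∈ 𝒰, C ⊆ U) →
    ∃ U : I κ → Set (Sp κ A), (∀ α, U α ∈ 𝒰) ∧
      X ⊆ ⋃ α, ⋂ β, ⋂ (_ : α < β), U β

/-- A (proper) open cover of `X` of size κ, indexed by `I κ`. -/
def IsOCovSeq (X : Set (Sp κ A)) (U : I κ → Set (Sp κ A)) : Prop :=
  (∀ α, OpenK κ A (U α)) ∧ (∀ α, U α ≠ X) ∧ X ⊆ ⋃ α, U α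

/-- A (proper) κ-γ-cover of `X`, indexed by `I κ`. -/
def IsGammaCovSeq (X : Set (Sp κ A)) (U : I κ → Set (Sp κ A)) : Prop :=
  (∀ α, OpenK κ A (U α)) ∧ (∀ α, U α ≠ X) ∧
    X ⊆ ⋃ α, ⋂ β, ⋂ (_ : α < β), U β

/-- The cover `U` is essentially of size κ: no subfamily of size `< κ` covers `X`. -/
def EssK (X : Set (Sp κ A)) (U : I κ → Set (Sp κ A)) : Prop :=
  ∀ s : Set (I κ), #s < κ → ¬ X ⊆ ⋃ β ∈ s, U β

/-- The selection principle `S₁^κ(Γ_κ, Γ_κ)`. -/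
def S1GammaGamma (X : Set (Sp κ A)) : Prop :=
  ∀ 𝒰 : I κ → I κ → Set (Sp κ A), (∀ α, IsGammaCovSeq κ A X (𝒰 α)) →
    ∃ f : I κ → I κ, IsGammaCovSeq κ A X (fun α => 𝒰 α (f α))

/-- The κ-Hurewicz property `U^κ_{<κ}(O_κ, Γ_κ)`. -/
def KHurewicz (X : Set (Sp κ A)) : Prop :=
  ∀ 𝒰 : I κ → I κ → Set (Sp κ A), (∀ α, IsOCovSeq κ A X (𝒰 α)) →
    (∀ α, EssK κ A X (𝒰 α)) →
    ∃ V : I κ → Set (I κ), (∀ α, #(V α) < κ) ∧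
      IsGammaCovSeq κ A X (fun α => ⋃ β ∈ V α, 𝒰 α β)

/-- The κ-Menger property `U^κ_{<κ}(O_κ, O_κ)`. -/
def KMenger (X : Set (Sp κ A)) : Prop :=
  ∀ 𝒰 : I κ → I κ → Set (Sp κ A), (∀ α, IsOCovSeq κ A X (𝒰 α)) →
    (∀ α, EssK κ A X (𝒰 α)) →
    ∃ V : I κ → Set (I κ), (∀ α, #(V α) < κ) ∧
      IsOCovSeq κ A X (fun α => ⋃ β ∈ V α, 𝒰 α β)

/-- The κ-Rothberger property `S₁^κ(O_κ, O_κ)`. -/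
def KRothberger (X : Set (Sp κ A)) : Prop :=
  ∀ 𝒰 : I κ → I κ → Set (Sp κ A), (∀ α, IsOCovSeq κ A X (𝒰 α)) →
    ∃ f : I κ → I κ, IsOCovSeq κ A X (fun α => 𝒰 α (f α))

/-- Closed unbounded subset of `I κ`. -/
def IsClubK (S : Set (I κ)) : Prop :=
  (∀ a : I κ, ∃ b ∈ S, a < b) ∧
  (∀ a : I κ, (∃ b, b < a) → (∀ b < a, ∃ c ∈ S, b < c ∧ c < a) → a ∈ S)

/-- Stationary subset of `I κ`. -/
def IsStatK (S : Set (I κ)) : Prop :=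
  ∀ C : Set (I κ), IsClubK κ C → (S ∩ C).Nonempty

/-- The diamond principle `◇_κ(E)`. -/
def DiamondK (E : Set (I κ)) : Prop :=
  ∃ s : I κ → Set (I κ), (∀ α, s α ⊆ Iio α) ∧
    ∀ X : Set (I κ), IsStatK κ {α | α ∈ E ∧ X ∩ Iio α = s α}

/-- The guessing principle `◇_κ(E, 2^κ, NS_κ)`. -/
def DiamondFunK (E : Set (I κ)) : Prop :=
  ∃ s : I κ → Sp κ Bool,
    ∀ x : Sp κ Bool, IsStatK κ {α | α ∈ E ∧ ∀ β < α, x β = s α β}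

/-- `S` is `X`-small. -/
def XSmall (X : Set (I κ)) (S : Set (Sp κ A)) : Prop :=
  ∃ a : I κ → Sp κ A, S ⊆ ⋃ α ∈ X, cyl κ A (a α) α

/-- `S` is small in `A^κ`. -/
def SmallK (S : Set (Sp κ A)) : Prop :=
  ∃ lam : Cardinal, lam < κ ∧ ∀ α : I κ, ∃ T : Set (Sp κ A),
    #T ≤ lam ∧ S ⊆ ⋃ x ∈ T, cyl κ A x α


/-
A small set `S` is covered, at every level `α`, by at most `λ < κ` basic sets `[x ↾ α]`,
and such a union is closed, so it also covers the closure of `S`. Above any basic open set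
`[p ↾ ξ]` the level `α = ξ + λ` leaves `λ` free coordinates, which produce `|A|^λ > λ` points
of `[p ↾ ξ]` lying in pairwise different level-`α` cylinders; hence the closure of `S` contains
no basic open set.

For the second part split `κ` into two pieces of size `κ`: the range of an injection
`d : κ → κ` and its complement `C`, which is unbounded. The closed set of functions equal to a
fixed `a` on `C` is nowhere dense, and it is not strongly null: given a cover by `[a_α ↾ ξ_α]`
with `ξ_α > d α`, diagonalize along `d`.
-/

section Bounded

attribute [local instance] bt

variable {κ A}

open Function

theorem mem_cyl_self (x : Sp κ A) (ξ : I κ) : x ∈ cyl κ A x ξ := fun _ _ => rfl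

theorem isOpen_cyl (x : Sp κ A) (ξ : I κ) : IsOpen (cyl κ A x ξ) :=
  TopologicalSpace.isOpen_generateFrom_of_mem ⟨x, ξ, rfl⟩

theorem cyl_subset_cyl {x y : Sp κ A} {ξ η : I κ} (hy : y ∈ cyl κ A x ξ) (h : ξ ≤ η) :
    cyl κ A y η ⊆ cyl κ A x ξ :=
  fun _ hz β hβ => (hz β (hβ.trans_le h)).trans (hy β hβ)

theorem isTopologicalBasis_cyl [Nonempty (I κ)] :
    TopologicalSpace.IsTopologicalBasis {S : Set (Sp κ A) | ∃ x ξ, S = cyl κ A x ξ} := by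
  refine ⟨?_, ?_, rfl⟩
  · rintro _ ⟨x₁, ξ₁, rfl⟩ _ ⟨x₂, ξ₂, rfl⟩ y ⟨h₁, h₂⟩
    exact ⟨cyl κ A y (max ξ₁ ξ₂), ⟨y, _, rfl⟩, mem_cyl_self y _,
      subset_inter (cyl_subset_cyl h₁ (le_max_left _ _))
        (cyl_subset_cyl h₂ (le_max_right _ _))⟩
  · exact sUnion_eq_univ_iff.2 fun y =>
      ⟨_, ⟨y, Classical.arbitrary _, rfl⟩, mem_cyl_self _ _⟩

theorem interior_eq_empty_iff_forall_not_cyl_subset [Nonempty (I κ)] {s : Set (Sp κ A)} :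
    interior s = ∅ ↔ ∀ x ξ, ¬ cyl κ A x ξ ⊆ s := by
  refine ⟨fun h x ξ hs => ?_, fun h => eq_empty_iff_forall_notMem.2 fun y hy => ?_⟩
  · simpa [h] using interior_maximal hs (isOpen_cyl x ξ) (mem_cyl_self x ξ)
  · obtain ⟨_, ⟨x, ξ, rfl⟩, -, hs⟩ :=
      isTopologicalBasis_cyl.exists_subset_of_mem_open hy isOpen_interior
    exact h x ξ (hs.trans interior_subset)

theorem isClosed_biUnion_cyl (T : Set (Sp κ A)) (α : I κ) :
    IsClosed (⋃ x ∈ T, cyl κ A x α) := by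
  refine isOpen_compl_iff.1 <| isOpen_iff_forall_mem_open.2 fun z hz =>
    ⟨cyl κ A z α, fun w hw hwT => hz ?_, isOpen_cyl z α, mem_cyl_self z α⟩
  obtain ⟨x, hx, hwx⟩ := mem_iUnion₂.1 hwT
  exact mem_iUnion₂.2 ⟨x, hx, fun β hβ => (hw β hβ).symm.trans (hwx β hβ)⟩

theorem isClosed_setOf_apply_eq [NoMaxOrder (I κ)] (i : I κ) (a : A) :
    IsClosed {y : Sp κ A | y i = a} := by
  obtain ⟨j, hij⟩ := exists_gt i
  exact isOpen_compl_iff.1 <| isOpen_iff_forall_mem_open.2 fun z hz =>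
    ⟨cyl κ A z j, fun w hw hwa => hz ((hw i hij).symm.trans hwa), isOpen_cyl z j,
      mem_cyl_self z j⟩

theorem mk_pi_le_of_cyl_subset_biUnion_cyl {J : Type} {ι : J → I κ} (hι : Injective ι)
    {p : Sp κ A} {ξ α : I κ} (hξ : ∀ j, ξ ≤ ι j) (hα : ∀ j, ι j < α)
    {T : Set (Sp κ A)} (hT : cyl κ A p ξ ⊆ ⋃ x ∈ T, cyl κ A x α) : #(J → A) ≤ #T := by
  have hmem : ∀ w : J → A, extend ι w p ∈ cyl κ A p ξ := fun w β hβ =>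
    extend_apply' _ _ _ fun ⟨j, hj⟩ => (hξ j).not_gt (hj ▸ hβ)
  choose x hxT hx using fun w => mem_iUnion₂.1 (hT (hmem w))
  have hw : ∀ w j, w j = x w (ι j) := fun w j =>
    (hι.extend_apply w p j).symm.trans (hx w (ι j) (hα j))
  refine mk_le_of_injective (f := fun w => (⟨x w, hxT w⟩ : T)) fun w w' h => funext fun j => ?_
  rw [hw w, hw w']
  exact congrFun (congrArg Subtype.val h) (ι j)

theorem exists_injective_mem_Ico (hκ : ℵ₀ ≤ κ) (ξ : I κ) {μ : Cardinal.{0}} (hμ : μ < κ) :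
    ∃ α : I κ, ∃ ι : μ.ord.ToType → I κ,
      Injective ι ∧ (∀ j, ξ ≤ ι j) ∧ ∀ j, ι j < α := by
  set e := Ordinal.ToType.mk (o := κ.ord)
  set o : Ordinal := (e.symm ξ : Ordinal)
  have hend : o + μ.ord < κ.ord := by
    rw [lt_ord, Ordinal.card_add, card_ord]
    exact add_lt_of_lt hκ (lt_ord.1 (e.symm ξ).2) hμ
  have hlt : ∀ j : μ.ord.ToType, o + (j : Ordinal) < o + μ.ord := fun j =>
    add_lt_add_right (Ordinal.ToType.mk.symm j).2 o
  refine ⟨e ⟨_, hend⟩, fun j => e ⟨_, (hlt j).trans hend⟩, fun j j' h => ?_, fun j => ?_,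
    fun j => e.lt_iff_lt.2 (hlt j)⟩
  · exact Ordinal.ToType.mk.symm.injective
      (Subtype.ext (add_left_cancel (congrArg Subtype.val (e.injective h))))
  · exact e.symm_apply_le.1 (Subtype.mk_le_mk.2 le_self_add)

theorem nwdK_of_smallK [Nonempty (I κ)] [Nontrivial A] (hκ : ℵ₀ ≤ κ) {S : Set (Sp κ A)}
    (hS : SmallK κ A S) : NwdK κ A S := by
  obtain ⟨μ, hμ, hcov⟩ := hS
  refine interior_eq_empty_iff_forall_not_cyl_subset.2 fun p ξ hp => ?_
  obtain ⟨α, ι, hι, hξ, hα⟩ := exists_injective_mem_Ico hκ ξ hμ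
  obtain ⟨T, hT, hST⟩ := hcov α
  have hcount := mk_pi_le_of_cyl_subset_biUnion_cyl hι hξ hα
    (hp.trans (closure_minimal hST (isClosed_biUnion_cyl T α)))
  rw [← power_def, mk_toType, card_ord] at hcount
  exact (cantor' μ (one_lt_iff_nontrivial.2 ‹_›)).not_ge (hcount.trans hT)

theorem exists_injective_unbounded_compl_range (hκ : ℵ₀ ≤ κ) :
    ∃ d : I κ → I κ, Injective d ∧ ∀ ξ, ∃ c ∉ range d, ξ ≤ c := by
  obtain ⟨e⟩ : Nonempty (I κ ⊕ I κ ≃ I κ) := by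
    rw [← Cardinal.eq, ← add_def, mk_toType, card_ord, add_eq_self hκ]
  refine ⟨e ∘ Sum.inr, e.injective.comp Sum.inr_injective, fun ξ => ?_⟩
  by_contra! h
  have hsub : range (e ∘ Sum.inl) ⊆ Iio ξ := by
    rintro _ ⟨α, rfl⟩
    exact h _ fun ⟨β, hβ⟩ => Sum.inr_ne_inl (e.injective hβ)
  have := (mk_le_mk_of_subset hsub).trans_lt (mk_Iio_lt ξ (by simp))
  rw [mk_range_eq _ (e.injective.comp Sum.inl_injective)] at this
  exact this.false

theorem nwdK_setOf_forall_eq [Nonempty (I κ)] [NoMaxOrder (I κ)] [Nontrivial A]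
    {C : Set (I κ)} (hC : ∀ ξ, ∃ c ∈ C, ξ ≤ c) (a : A) :
    NwdK κ A {y | ∀ i ∈ C, y i = a} := by
  have hcl : IsClosed {y : Sp κ A | ∀ i ∈ C, y i = a} := by
    simpa only [ofPred_forall] using isClosed_biInter fun i _ => isClosed_setOf_apply_eq i a
  refine hcl.isNowhereDense_iff.2 (interior_eq_empty_iff_forall_not_cyl_subset.2 fun p ξ hp => ?_)
  obtain ⟨c, hc, hξc⟩ := hC ξ
  obtain ⟨b, hb⟩ := exists_ne a
  have hupd : update p c b ∈ cyl κ A p ξ := fun β hβ =>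
    update_of_ne (hβ.trans_le hξc).ne b p
  simpa [hb] using hp hupd c hc

theorem not_sNullK_setOf_forall_eq [NoMaxOrder (I κ)] [Nontrivial A] {C : Set (I κ)}
    {d : I κ → I κ} (hd : Injective d) (hdC : ∀ α, d α ∉ C) (a : A) :
    ¬ SNullK κ A {y | ∀ i ∈ C, y i = a} := by
  intro hS
  choose ξ hξ using fun α => exists_gt (d α)
  obtain ⟨x, hx⟩ := hS ξ
  choose g hg using fun α => exists_ne (x α (d α))
  have hy : extend d g (fun _ => a) ∈ {y : Sp κ A | ∀ i ∈ C, y i = a} := fun i hi =>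
    extend_apply' _ _ _ fun ⟨α, hα⟩ => hdC α (hα ▸ hi)
  obtain ⟨α, hα⟩ := mem_iUnion.1 (hx hy)
  exact hg α ((hd.extend_apply g _ α).symm.trans (hα (d α) (hξ α)))

end Bounded

theorem stmt19_general (κ : Cardinal.{0}) (hk : Cardinal.aleph0 < κ)
    (A : Type) (hA : #A = 2 ∨ #A = κ) :
    (∀ S : Set (Sp κ A), SmallK κ A S → NwdK κ A S) ∧
    (∃ S : Set (Sp κ A), NwdK κ A S ∧ ¬ SNullK κ A S) := by
  have : Nonempty (I κ) :=
    Ordinal.nonempty_toType_iff.2 (ord_eq_zero.not.2 (aleph0_pos.trans hk).ne')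
  have := noMaxOrder hk.le
  have : Nontrivial A := one_lt_iff_nontrivial.1 <| by
    rcases hA with h | h <;> rw [h]
    exacts [one_lt_two, one_lt_aleph0.trans hk]
  obtain ⟨d, hd, hunbdd⟩ := exists_injective_unbounded_compl_range hk.le
  obtain ⟨a⟩ : Nonempty A := inferInstance
  exact ⟨fun S => nwdK_of_smallK hk.le, _, nwdK_setOf_forall_eq hunbdd a,
    not_sNullK_setOf_forall_eq (C := (range d)ᶜ) hd (fun α h => h ⟨α, rfl⟩) a⟩

theorem stmt19 (κ : Cardinal.{0}) (hk : Cardinal.aleph0 < κ) (hreg : κ.IsRegular) (hpow : κ ^< κ = κ)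
    (A : Type) (hA : #A = 2 ∨ #A = κ) :
    (∀ S : Set (Sp κ A), SmallK κ A S → NwdK κ A S) ∧
    (∃ S : Set (Sp κ A), NwdK κ A S ∧ ¬ SNullK κ A S) :=
  stmt19_general κ hk A hA

end GenSp
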